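/- arXiv:math/0507006 — 5 statements merged into one kernel-verified Lean document; each statement's English description precedes it below -/
import Mathlib

section
/- The endomorphism ρ₀ of ℤ⁴ determined by ρ₀(e)=-f, ρ₀(f)=-e-f-y, ρ₀(x)=f-x, ρ₀(y)=3f-x+y is an isometry of the symmetric bilinear form with Gram matrix G₀ = [[0,1,0,0],[1,0,0,0],[0,0,2,1],[0,0,1,-2]] (i.e. ρ₀ᵀ G₀ ρ₀ = G₀); moreover ρ₀⁵ = id, ρ₀ ≠ id, and id + ρ₀ + ρ₀² + ρ₀³ + ρ₀⁴ = 0 (in particular ρ₀ has order 5 and fixes no nonzero vector). -/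
open Matrix

/-- Gram matrix of `U ⊕ V` in the basis `e, f, x, y`. -/
def G₀ : Matrix (Fin 4) (Fin 4) ℤ :=
  !![0, 1, 0, 0;
     1, 0, 0, 0;
     0, 0, 2, 1;
     0, 0, 1, -2]

/-- The matrix of `ρ₀` in the basis `e, f, x, y` (columns are the images of
`e, f, x, y`): `ρ₀(e) = -f`, `ρ₀(f) = -e - f - y`, `ρ₀(x) = f - x`, `ρ₀(y) = 3f - x + y`. -/
def ρ₀ : Matrix (Fin 4) (Fin 4) ℤ :=
  !![0, -1, 0, 0;
     -1, -1, 1, 3;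
     0, 0, -1, -1;
     0, -1, 0, 1]

theorem pow_five_eq_one_of_cyclotomic_five {R : Type*} [Ring R] {a : R}
    (h : 1 + a + a ^ 2 + a ^ 3 + a ^ 4 = 0) : a ^ 5 = 1 := by
  have hsum : ∑ i ∈ Finset.range 5, a ^ i = 0 := by
    simpa [Finset.sum_range_succ, add_assoc] using h
  have := geom_sum_mul a 5
  rw [hsum, zero_mul] at this
  exact sub_eq_zero.mp this.symm

theorem ρ₀_transpose_mul_G₀_mul_ρ₀ : ρ₀ᵀ * G₀ * ρ₀ = G₀ := by
  decide

theorem one_add_ρ₀_add_pow_eq_zero : 1 + ρ₀ + ρ₀ ^ 2 + ρ₀ ^ 3 + ρ₀ ^ 4 = 0 := by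
  decide

theorem ρ₀_ne_one : ρ₀ ≠ 1 := fun h => by
  simpa [ρ₀] using congrFun (congrFun h 0) 0

theorem stmt0 :
    ρ₀ᵀ * G₀ * ρ₀ = G₀ ∧
    ρ₀ ^ 5 = 1 ∧
    ρ₀ ≠ 1 ∧
    1 + ρ₀ + ρ₀ ^ 2 + ρ₀ ^ 3 + ρ₀ ^ 4 = 0 :=
  ⟨ρ₀_transpose_mul_G₀_mul_ρ₀,
    pow_five_eq_one_of_cyclotomic_five one_add_ρ₀_add_pow_eq_zero,
    ρ₀_ne_one, one_add_ρ₀_add_pow_eq_zero⟩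
end

section
/- The endomorphism ρ = ρ₀⊕ρ₄⊕ρ₄ of T = ℤ¹² satisfies: (1) ρᵀ G ρ = G, i.e. ρ is an isometry of T; (2) ρ⁵ = id and id + ρ + ρ² + ρ³ + ρ⁴ = 0, so ρ has order 5 and no nonzero fixed vectors; (3) det G = 125; (4) the matrix (ρ − id)·G⁻¹ has integer entries, i.e. ρ acts trivially on the discriminant group T*/T. -/
open Matrix

/-- Gram matrix of `T = U ⊕ V ⊕ A₄ ⊕ A₄` (block diagonal, in the basis
`e, f, x, y, e₁, …, e₄, e₁', …, e₄'`). -/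
def G : Matrix (Fin 12) (Fin 12) ℤ :=
  !![0, 1, 0, 0, 0, 0, 0, 0, 0, 0, 0, 0;
     1, 0, 0, 0, 0, 0, 0, 0, 0, 0, 0, 0;
     0, 0, 2, 1, 0, 0, 0, 0, 0, 0, 0, 0;
     0, 0, 1, -2, 0, 0, 0, 0, 0, 0, 0, 0;
     0, 0, 0, 0, -2, 1, 0, 0, 0, 0, 0, 0;
     0, 0, 0, 0, 1, -2, 1, 0, 0, 0, 0, 0;
     0, 0, 0, 0, 0, 1, -2, 1, 0, 0, 0, 0;
     0, 0, 0, 0, 0, 0, 1, -2, 0, 0, 0, 0;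
     0, 0, 0, 0, 0, 0, 0, 0, -2, 1, 0, 0;
     0, 0, 0, 0, 0, 0, 0, 0, 1, -2, 1, 0;
     0, 0, 0, 0, 0, 0, 0, 0, 0, 1, -2, 1;
     0, 0, 0, 0, 0, 0, 0, 0, 0, 0, 1, -2]

/-- The matrix of `ρ = ρ₀ ⊕ ρ₄ ⊕ ρ₄` (block diagonal). -/
def ρ : Matrix (Fin 12) (Fin 12) ℤ :=
  !![0, -1, 0, 0, 0, 0, 0, 0, 0, 0, 0, 0;
     -1, -1, 1, 3, 0, 0, 0, 0, 0, 0, 0, 0;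
     0, 0, -1, -1, 0, 0, 0, 0, 0, 0, 0, 0;
     0, -1, 0, 1, 0, 0, 0, 0, 0, 0, 0, 0;
     0, 0, 0, 0, 0, 0, 0, -1, 0, 0, 0, 0;
     0, 0, 0, 0, 1, 0, 0, -1, 0, 0, 0, 0;
     0, 0, 0, 0, 0, 1, 0, -1, 0, 0, 0, 0;
     0, 0, 0, 0, 0, 0, 1, -1, 0, 0, 0, 0;
     0, 0, 0, 0, 0, 0, 0, 0, 0, 0, 0, -1;
     0, 0, 0, 0, 0, 0, 0, 0, 1, 0, 0, -1;
     0, 0, 0, 0, 0, 0, 0, 0, 0, 1, 0, -1;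
     0, 0, 0, 0, 0, 0, 0, 0, 0, 0, 1, -1]

/-- The bilinear form of the lattice `T`: `⟨u, v⟩ = uᵀ G v`. -/
def B (u v : Fin 12 → ℤ) : ℤ := u ⬝ᵥ G.mulVec v

def Hm : Matrix (Fin 12) (Fin 12) ℤ :=
  !![0, 125, 0, 0, 0, 0, 0, 0, 0, 0, 0, 0;
     125, 0, 0, 0, 0, 0, 0, 0, 0, 0, 0, 0;
     0, 0, 50, 25, 0, 0, 0, 0, 0, 0, 0, 0;
     0, 0, 25, -50, 0, 0, 0, 0, 0, 0, 0, 0;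
     0, 0, 0, 0, -100, -75, -50, -25, 0, 0, 0, 0;
     0, 0, 0, 0, -75, -150, -100, -50, 0, 0, 0, 0;
     0, 0, 0, 0, -50, -100, -150, -75, 0, 0, 0, 0;
     0, 0, 0, 0, -25, -50, -75, -100, 0, 0, 0, 0;
     0, 0, 0, 0, 0, 0, 0, 0, -100, -75, -50, -25;
     0, 0, 0, 0, 0, 0, 0, 0, -75, -150, -100, -50;
     0, 0, 0, 0, 0, 0, 0, 0, -50, -100, -150, -75;
     0, 0, 0, 0, 0, 0, 0, 0, -25, -50, -75, -100]
def Nm : Matrix (Fin 12) (Fin 12) ℤ :=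
  !![-1, -1, 0, 0, 0, 0, 0, 0, 0, 0, 0, 0;
     -2, -1, 1, -1, 0, 0, 0, 0, 0, 0, 0, 0;
     0, 0, -1, 0, 0, 0, 0, 0, 0, 0, 0, 0;
     -1, 0, 0, 0, 0, 0, 0, 0, 0, 0, 0, 0;
     0, 0, 0, 0, 1, 1, 1, 1, 0, 0, 0, 0;
     0, 0, 0, 0, 0, 1, 1, 1, 0, 0, 0, 0;
     0, 0, 0, 0, 0, 0, 1, 1, 0, 0, 0, 0;
     0, 0, 0, 0, 0, 0, 0, 1, 0, 0, 0, 0;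
     0, 0, 0, 0, 0, 0, 0, 0, 1, 1, 1, 1;
     0, 0, 0, 0, 0, 0, 0, 0, 0, 1, 1, 1;
     0, 0, 0, 0, 0, 0, 0, 0, 0, 0, 1, 1;
     0, 0, 0, 0, 0, 0, 0, 0, 0, 0, 0, 1]

lemma hGH : G * Hm = (125 : ℤ) • (1 : Matrix (Fin 12) (Fin 12) ℤ) := by decide
lemma hRH : (ρ - 1) * Hm = (125 : ℤ) • Nm := by decide

lemma map_mul' (A B : Matrix (Fin 12) (Fin 12) ℤ) :
    (A * B).map (Int.cast : ℤ → ℚ) = A.map Int.cast * B.map Int.cast :=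
  Matrix.map_mul (f := Int.castRingHom ℚ)

lemma hGinv :
    (G.map (Int.cast : ℤ → ℚ))⁻¹ = (125 : ℚ)⁻¹ • Hm.map (Int.cast : ℤ → ℚ) := by
  apply Matrix.inv_eq_right_inv
  rw [Matrix.mul_smul, ← map_mul', hGH]
  ext i j
  simp only [Matrix.smul_apply, Matrix.map_apply, Matrix.one_apply, smul_eq_mul]
  by_cases h : i = j <;> simp [h] <;> norm_num

lemma hfinal :
    (ρ.map (Int.cast : ℤ → ℚ) - 1) * (G.map (Int.cast : ℤ → ℚ))⁻¹
      = Nm.map (Int.cast : ℤ → ℚ) := by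
  have h1 : ρ.map (Int.cast : ℤ → ℚ) - 1 = (ρ - 1).map (Int.cast : ℤ → ℚ) := by
    ext i j
    by_cases h : i = j <;>
      simp [Matrix.map_apply, Matrix.sub_apply, Matrix.one_apply, h]
  rw [hGinv, h1, Matrix.mul_smul, ← map_mul', hRH]
  ext i j
  simp only [Matrix.smul_apply, Matrix.map_apply, smul_eq_mul]
  push_cast
  ring

def MU : Matrix (Fin 2) (Fin 2) ℤ := !![0,1;1,0]
def MV : Matrix (Fin 2) (Fin 2) ℤ := !![2,1;1,-2]
def MA : Matrix (Fin 4) (Fin 4) ℤ := !![-2,1,0,0;1,-2,1,0;0,1,-2,1;0,0,1,-2]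
def M4 : Matrix (Fin 4) (Fin 4) ℤ := !![0,1,0,0;1,0,0,0;0,0,2,1;0,0,1,-2]
def M8 : Matrix (Fin 8) (Fin 8) ℤ :=
  !![-2,1,0,0,0,0,0,0;1,-2,1,0,0,0,0,0;0,1,-2,1,0,0,0,0;0,0,1,-2,0,0,0,0;
     0,0,0,0,-2,1,0,0;0,0,0,0,1,-2,1,0;0,0,0,0,0,1,-2,1;0,0,0,0,0,0,1,-2]
def e4 : (Fin 2 ⊕ Fin 2) ≃ Fin 4 := finSumFinEquiv
def e8 : (Fin 4 ⊕ Fin 4) ≃ Fin 8 := finSumFinEquiv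
def e12 : (Fin 4 ⊕ Fin 8) ≃ Fin 12 := finSumFinEquiv

lemma myblock {m n : Type} [DecidableEq m] [Fintype m] [DecidableEq n] [Fintype n]
    (A : Matrix m m ℤ) (D : Matrix n n ℤ) :
    (Matrix.fromBlocks A 0 0 D).det = A.det * D.det :=
  Matrix.det_fromBlocks_zero₂₁ A 0 D

lemma hMA : MA.det = 5 := by
  norm_num [MA, Matrix.det_succ_row_zero, Fin.sum_univ_succ]
  decide

lemma hM4 : M4.det = 5 := by
  have h : M4.submatrix e4 e4 = fromBlocks MU 0 0 MV := by decide
  calc M4.det = (M4.submatrix e4 e4).det := (Matrix.det_submatrix_equiv_self e4 M4).symm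
    _ = (fromBlocks MU 0 0 MV).det := by rw [h]
    _ = MU.det * MV.det := myblock MU MV
    _ = 5 := by norm_num [MU, MV, Matrix.det_fin_two]

lemma hM8 : M8.det = 25 := by
  have h : M8.submatrix e8 e8 = fromBlocks MA 0 0 MA := by decide
  calc M8.det = (M8.submatrix e8 e8).det := (Matrix.det_submatrix_equiv_self e8 M8).symm
    _ = (fromBlocks MA 0 0 MA).det := by rw [h]
    _ = MA.det * MA.det := myblock MA MA
    _ = 25 := by rw [hMA]; norm_num

lemma hdetG : G.det = 125 := by
  have h : G.submatrix e12 e12 = fromBlocks M4 0 0 M8 := by decide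
  calc G.det = (G.submatrix e12 e12).det := (Matrix.det_submatrix_equiv_self e12 G).symm
    _ = (fromBlocks M4 0 0 M8).det := by rw [h]
    _ = M4.det * M8.det := myblock M4 M8
    _ = 125 := by rw [hM4, hM8]; norm_num

theorem stmt2 :
    ρᵀ * G * ρ = G ∧
    (ρ ^ 5 = 1 ∧ 1 + ρ + ρ ^ 2 + ρ ^ 3 + ρ ^ 4 = 0) ∧
    G.det = 125 ∧
    (∀ i j, ∃ n : ℤ,
      ((ρ.map (Int.cast : ℤ → ℚ) - 1) * (G.map (Int.cast : ℤ → ℚ))⁻¹) i j = (n : ℚ)) := by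
  exact ⟨by decide, ⟨by decide, by decide⟩, hdetG,
    fun i j => ⟨Nm i j, by rw [hfinal]; rfl⟩⟩
end

section
/- Let e ∈ T be a nonzero vector with ⟨e,e⟩ = 0, and let K be the subgroup of T generated by e, ρ(e), ρ²(e), ρ³(e), ρ⁴(e). Then K contains a vector v with ⟨v,v⟩ > 0. -/
/-!
If `⟨e, ρᵏe⟩ ≠ 0` for some `k < 5`, then one of `e ± ρᵏe` has positive square. Otherwise, as `ρ`
is an isometry with `ρ⁵ = 1`, the orbit of `e` spans a totally isotropic subspace `W` of `T ⊗ ℚ`.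
Since `ρ` is annihilated by the irreducible polynomial `Φ₅`, no nonzero polynomial of degree `< 4`
in `ρ` kills `e`, so `dim W ≥ 4`. But `T` has signature `(2, 10)`: the orthogonal complement of the
positive plane spanned by `e + f ∈ U` and `x ∈ V` is negative definite, so pairing with that plane
embeds `W` into `ℚ²`.
-/

open Matrix

open Polynomial

section IsotropicOrbit

variable {K M : Type*} [Field K] [AddCommGroup M] [Module K M]

theorem aeval_apply_ne_zero_of_degree_lt {f : Module.End K M} {p q : K[X]} (hp : Irreducible p)
    (hfp : aeval f p = 0) {v : M} (hv : v ≠ 0) (hq : q ≠ 0) (hqp : q.degree < p.degree) :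
    aeval f q v ≠ 0 := by
  have hpq : IsCoprime p q :=
    hp.coprime_iff_not_dvd.mpr fun hdvd => (degree_le_of_dvd hdvd hq).not_gt hqp
  intro hqv
  refine hv ((Submodule.disjoint_def.mp (disjoint_ker_aeval_of_isCoprime f hpq)) v ?_ hqv)
  simp [hfp]

theorem apply_aeval_apply_aeval_eq_zero {R N : Type*} [CommRing R] [AddCommGroup N] [Module R N]
    (β : LinearMap.BilinForm R N) (f : Module.End R N) {v : N}
    (h : ∀ i j : ℕ, β ((f ^ i) v) ((f ^ j) v) = 0) (a b : R[X]) :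
    β (aeval f a v) (aeval f b v) = 0 := by
  simp [aeval_eq_sum_range, h]

theorem natDegree_le_of_isotropic_orbit {n : ℕ} (β : LinearMap.BilinForm K M) (P : Fin n → M)
    (hβ : ∀ w, β w w = 0 → (∀ k, β (P k) w = 0) → w = 0)
    {f : Module.End K M} {p : K[X]} (hp : Irreducible p) (hfp : aeval f p = 0)
    {v : M} (hv : v ≠ 0) (hiso : ∀ i j : ℕ, β ((f ^ i) v) ((f ^ j) v) = 0) :
    p.natDegree ≤ n := by
  let φ : degreeLT K p.natDegree →ₗ[K] Fin n → K :=
    LinearMap.pi (fun k => β (P k)) ∘ₗ LinearMap.applyₗ v ∘ₗ (aeval f).toLinearMap ∘ₗ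
      (degreeLT K p.natDegree).subtype
  have hφ : Function.Injective φ := by
    refine (injective_iff_map_eq_zero φ).mpr fun ⟨q, hq⟩ hφq => ?_
    have hqv : aeval f q v = 0 :=
      hβ _ (apply_aeval_apply_aeval_eq_zero β f hiso q q) fun k => congrFun hφq k
    by_contra hq0
    refine aeval_apply_ne_zero_of_degree_lt hp hfp hv (fun h => hq0 (Subtype.ext h)) ?_ hqv
    rwa [degree_eq_natDegree hp.ne_zero, ← mem_degreeLT]
  simpa [(degreeLTEquiv K p.natDegree).finrank_eq] using
    LinearMap.finrank_le_finrank_of_injective hφ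

end IsotropicOrbit

lemma G_transpose : Gᵀ = G := by decide

lemma transpose_ρ_mul_G_mul_ρ : ρᵀ * G * ρ = G := by decide

lemma sum_range_ρ_pow : ∑ i ∈ Finset.range 5, ρ ^ i = 0 := by decide

lemma ρ_pow_five : ρ ^ 5 = 1 := by
  have h := geom_sum_mul ρ 5
  rwa [sum_range_ρ_pow, zero_mul, eq_comm, sub_eq_zero] at h

lemma B_comm (u v : Fin 12 → ℤ) : B u v = B v u := by
  rw [B, B, dotProduct_mulVec, ← mulVec_transpose, G_transpose, dotProduct_comm]

lemma B_mulVec_ρ (u v : Fin 12 → ℤ) : B (ρ *ᵥ u) (ρ *ᵥ v) = B u v := by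
  conv_rhs => rw [B, ← transpose_ρ_mul_G_mul_ρ, ← mulVec_mulVec, ← mulVec_mulVec,
    dotProduct_mulVec, vecMul_transpose]
  rfl

lemma B_pow_mulVec_ρ (k : ℕ) (u v : Fin 12 → ℤ) : B (ρ ^ k *ᵥ u) (ρ ^ k *ᵥ v) = B u v := by
  induction k with
  | zero => simp
  | succ k ih => rw [pow_succ', ← mulVec_mulVec, ← mulVec_mulVec, B_mulVec_ρ, ih]

lemma B_add_add_self (u v : Fin 12 → ℤ) : B (u + v) (u + v) = B u u + 2 * B u v + B v v := by
  have h := B_comm v u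
  simp only [B, mulVec_add, dotProduct_add, add_dotProduct] at h ⊢
  linarith

lemma B_sub_sub_self (u v : Fin 12 → ℤ) : B (u - v) (u - v) = B u u - 2 * B u v + B v v := by
  have h := B_comm v u
  simp only [B, mulVec_sub, dotProduct_sub, sub_dotProduct] at h ⊢
  linarith

lemma B_orbit_eq_zero {e : Fin 12 → ℤ} (h : ∀ k < 5, B e (ρ ^ k *ᵥ e) = 0) (i j : ℕ) :
    B (ρ ^ i *ᵥ e) (ρ ^ j *ᵥ e) = 0 := by
  -- `4 * i + j ≡ j - i [MOD 5]`
  have hj : ρ ^ j = ρ ^ i * ρ ^ ((4 * i + j) % 5) := by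
    rw [← pow_eq_pow_mod _ ρ_pow_five, ← pow_add, pow_eq_pow_mod j ρ_pow_five,
      pow_eq_pow_mod (i + _) ρ_pow_five]
    congr 1
    omega
  rw [hj, ← mulVec_mulVec, B_pow_mulVec_ρ]
  exact h _ (Nat.mod_lt _ (by norm_num))

/-- The plane spanned by `e + f ∈ U` and `x ∈ V`. -/
def positivePlane : Fin 2 → Fin 12 → ℚ := ![Pi.single 0 1 + Pi.single 1 1, Pi.single 2 1]

lemma eq_zero_of_isotropic_of_orthogonal_positivePlane (w : Fin 12 → ℚ)
    (hw : w ⬝ᵥ G.map (Int.castRingHom ℚ) *ᵥ w = 0)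
    (hP : ∀ k, positivePlane k ⬝ᵥ G.map (Int.castRingHom ℚ) *ᵥ w = 0) : w = 0 := by
  have hU : w 1 + w 0 = 0 := by
    simpa [positivePlane, G, mulVec, dotProduct, Fin.sum_univ_succ] using hP 0
  have hV : 2 * w 2 + w 3 = 0 := by
    simpa [positivePlane, G, mulVec, dotProduct, Fin.sum_univ_succ] using hP 1
  have hform : w ⬝ᵥ G.map (Int.castRingHom ℚ) *ᵥ w =
      2 * w 0 * w 1 + 2 * w 2 ^ 2 + 2 * w 2 * w 3 - 2 * w 3 ^ 2
      - (w 4 ^ 2 + (w 4 - w 5) ^ 2 + (w 5 - w 6) ^ 2 + (w 6 - w 7) ^ 2 + w 7 ^ 2)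
      - (w 8 ^ 2 + (w 8 - w 9) ^ 2 + (w 9 - w 10) ^ 2 + (w 10 - w 11) ^ 2 + w 11 ^ 2) := by
    simp only [dotProduct, mulVec, G, Int.reduceNeg, Int.coe_castRingHom, map_apply, of_apply,
      cons_val', cons_val_fin_one, Fin.sum_univ_succ, Fin.isValue, cons_val_zero, cons_val_succ,
      Fin.succ_zero_eq_one, Fin.succ_one_eq_two, Fin.reduceSucc, Finset.univ_unique,
      Fin.default_eq_zero, Finset.sum_singleton, Int.cast_zero, zero_mul, Int.cast_one, one_mul,
      add_zero, zero_add, Int.cast_ofNat, Int.cast_neg, neg_mul]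
    ring
  have hsq : 2 * w 0 ^ 2 + 10 * w 2 ^ 2
      + (w 4 ^ 2 + (w 4 - w 5) ^ 2 + (w 5 - w 6) ^ 2 + (w 6 - w 7) ^ 2 + w 7 ^ 2)
      + (w 8 ^ 2 + (w 8 - w 9) ^ 2 + (w 9 - w 10) ^ 2 + (w 10 - w 11) ^ 2 + w 11 ^ 2) = 0 := by
    linear_combination 2 * w 0 * hU + (6 * w 2 - 2 * w 3) * hV - hw + hform
  simp (disch := positivity) only [add_eq_zero_iff_of_nonneg, mul_eq_zero, pow_eq_zero_iff,
    sub_eq_zero, OfNat.ofNat_ne_zero, false_or, and_assoc] at hsq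
  obtain ⟨h0, h2, h4, h45, h56, h67, h7, h8, h89, h910, h1011, h11⟩ := hsq
  funext i
  fin_cases i <;> simp <;> linarith

lemma toLin'_map_ρ_pow_apply (k : ℕ) (u : Fin 12 → ℤ) :
    (toLin' (ρ.map (Int.castRingHom ℚ)) ^ k) (Int.castRingHom ℚ ∘ u) =
      Int.castRingHom ℚ ∘ (ρ ^ k *ᵥ u) := by
  rw [← toLin'_pow, toLin'_apply, ← Matrix.map_pow]
  funext i
  exact (RingHom.map_mulVec _ _ _ i).symm

lemma toLinearMap₂'_map_G_apply (u v : Fin 12 → ℤ) :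
    toLinearMap₂' ℚ (G.map (Int.castRingHom ℚ)) (Int.castRingHom ℚ ∘ u) (Int.castRingHom ℚ ∘ v) =
      Int.castRingHom ℚ (B u v) := by
  rw [toLinearMap₂'_apply', B, RingHom.map_dotProduct]
  congr 1
  funext i
  exact (RingHom.map_mulVec _ _ _ i).symm

lemma aeval_toLin'_map_ρ_cyclotomic_five :
    aeval (toLin' (ρ.map (Int.castRingHom ℚ))) (cyclotomic 5 ℚ) = 0 := by
  have := Fact.mk Nat.prime_five
  have hsum : ∑ i ∈ Finset.range 5, ρ.map (Int.castRingHom ℚ) ^ i = 0 := by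
    simp_rw [← RingHom.mapMatrix_apply, ← map_pow, ← map_sum, sum_range_ρ_pow, map_zero]
  simp_rw [cyclotomic_prime, map_sum, aeval_X_pow, ← toLin'_pow, ← map_sum, hsum, map_zero]

theorem exists_B_orbit_ne_zero {e : Fin 12 → ℤ} (he : e ≠ 0) :
    ∃ i j : ℕ, B (ρ ^ i *ᵥ e) (ρ ^ j *ᵥ e) ≠ 0 := by
  by_contra! hiso
  have hdeg := natDegree_le_of_isotropic_orbit
    (toLinearMap₂' ℚ (G.map (Int.castRingHom ℚ))) positivePlane
    (by simpa only [toLinearMap₂'_apply'] using eq_zero_of_isotropic_of_orthogonal_positivePlane)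
    (cyclotomic.irreducible_rat (by norm_num : 0 < 5)) aeval_toLin'_map_ρ_cyclotomic_five
    (v := Int.castRingHom ℚ ∘ e) (fun h => he (funext fun k => by simpa using congrFun h k))
    (fun i j => by simp only [toLin'_map_ρ_pow_apply, toLinearMap₂'_map_G_apply, hiso, map_zero])
  rw [natDegree_cyclotomic, Nat.totient_prime Nat.prime_five] at hdeg
  omega

theorem stmt4 (e : Fin 12 → ℤ) (he : e ≠ 0) (hisot : B e e = 0) :
    ∃ v ∈ Submodule.span ℤ {w : Fin 12 → ℤ | ∃ i < 5, w = (ρ ^ i).mulVec e},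
      0 < B v v := by
  by_contra! hK
  have mem (k : ℕ) (hk : k < 5) :
      ρ ^ k *ᵥ e ∈ Submodule.span ℤ {w | ∃ i < 5, w = (ρ ^ i).mulVec e} :=
    Submodule.subset_span ⟨k, hk, rfl⟩
  have horth (k : ℕ) (hk : k < 5) : B e (ρ ^ k *ᵥ e) = 0 := by
    have hnorm : B (ρ ^ k *ᵥ e) (ρ ^ k *ᵥ e) = 0 := by rw [B_pow_mulVec_ρ, hisot]
    have hadd := hK _ (Submodule.add_mem _ (mem 0 (by norm_num)) (mem k hk))
    have hsub := hK _ (Submodule.sub_mem _ (mem 0 (by norm_num)) (mem k hk))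
    rw [pow_zero, one_mulVec] at hadd hsub
    rw [B_add_add_self, hisot, hnorm] at hadd
    rw [B_sub_sub_self, hisot, hnorm] at hsub
    linarith
  obtain ⟨i, j, hij⟩ := exists_B_orbit_ne_zero he
  exact hij (B_orbit_eq_zero horth i j)
end

section
/- For all u, v ∈ T the following hold: (1) Σ_{i=0}^{3} (i+1)·ρ^i(u − ρ(u)) = −5·ρ⁴(u); (2) the integer Σ_{i=0}^{3} (i+1)·⟨ρ^i(u), v⟩ is divisible by 5. (Hence the map φ(u) = (1/5)Σ_{i=0}^{3}(i+1)ρ^i(u) takes values in the dual lattice T* and sends (1−ρ)T into T.) -/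
open Matrix

/-!
The matrix `ρ` is annihilated by the cyclotomic polynomial `1 + X + X² + X³ + X⁴`, and Abel
summation turns `∑_{i<4} (i+1) ρ^i (1 - ρ)` into `∑_{i≤4} ρ^i - 5 ρ⁴`, which gives (1).
For (2), with `M = ∑_{i<4} (i+1) ρ^i` the sum is `uᵀ (Mᵀ G) v`, and every entry of `Mᵀ G` is
divisible by 5; note that `M ≡ (1 - ρ)³` modulo 5.
-/

open Finset

theorem sum_range_intCast_add_one_smul_pow_mul_one_sub {R : Type*} [Ring R] (r : R) (n : ℕ) :
    ∑ i ∈ range n, ((i : ℤ) + 1) • (r ^ i * (1 - r)) =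
      ∑ i ∈ range (n + 1), r ^ i - ((n : ℤ) + 1) • r ^ n := by
  induction n with
  | zero => simp
  | succ n ih =>
    rw [sum_range_succ, ih, sum_range_succ _ (n + 1), pow_succ]
    push_cast
    simp only [add_smul, one_smul, mul_sub, mul_one, smul_sub]
    abel

theorem dvd_dotProduct_mulVec {m n R : Type*} [Fintype m] [Fintype n] [CommSemiring R]
    {k : R} {C : Matrix m n R} (hC : ∀ i j, k ∣ C i j) (u : m → R) (v : n → R) :
    k ∣ u ⬝ᵥ C *ᵥ v :=
  dvd_sum fun i _ => dvd_mul_of_dvd_right (dvd_sum fun j _ => dvd_mul_of_dvd_left (hC i j) _) _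

theorem sum_range_five_pow_ρ : ∑ i ∈ range 5, ρ ^ i = 0 := by decide

theorem five_dvd_transpose_mul_G (i j : Fin 12) :
    (5 : ℤ) ∣ ((∑ k ∈ range 4, ((k : ℤ) + 1) • ρ ^ k)ᵀ * G) i j := by
  revert i j
  decide

theorem stmt7 :
    (∀ u : Fin 12 → ℤ,
      ∑ i ∈ Finset.range 4, ((i : ℤ) + 1) • (ρ ^ i).mulVec (u - ρ.mulVec u) =
        (-5 : ℤ) • (ρ ^ 4).mulVec u) ∧
    (∀ u v : Fin 12 → ℤ,
      (5 : ℤ) ∣ ∑ i ∈ Finset.range 4, ((i : ℤ) + 1) * B ((ρ ^ i).mulVec u) v) := by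
  refine ⟨fun u => ?_, fun u v => ?_⟩
  · calc _ = (∑ i ∈ range 4, ((i : ℤ) + 1) • (ρ ^ i * (1 - ρ))) *ᵥ u := by
          simp only [sum_mulVec, smul_mulVec, ← mulVec_mulVec, sub_mulVec, one_mulVec]
      _ = (-5 : ℤ) • (ρ ^ 4) *ᵥ u := by
          rw [sum_range_intCast_add_one_smul_pow_mul_one_sub, sum_range_five_pow_ρ, zero_sub,
            ← neg_smul, smul_mulVec]
          norm_num
  · have h : ∑ i ∈ range 4, ((i : ℤ) + 1) * B ((ρ ^ i) *ᵥ u) v =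
        u ⬝ᵥ ((∑ i ∈ range 4, ((i : ℤ) + 1) • ρ ^ i)ᵀ * G) *ᵥ v := by
      conv_rhs => rw [← mulVec_mulVec, dotProduct_mulVec, vecMul_transpose]
      simp only [B, sum_mulVec, smul_mulVec, sum_dotProduct, smul_dotProduct, smul_eq_mul]
    exact h ▸ dvd_dotProduct_mulVec five_dvd_transpose_mul_G u v
end

section
/- The symmetric matrix N = [[-8,2,2,2],[2,-8,2,2],[2,2,-8,2],[2,2,2,-8]] has determinant 2000 = 2⁴·5³, and the integral quadratic form it defines represents no vector of norm −2: for every a ∈ ℤ⁴, aᵀNa ≠ −2. -/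
/-!
`N = 2 • B` with `B` symmetric with even diagonal, so `aᵀBa` is even and `aᵀNa = 2 aᵀBa` lies in
`4ℤ`; in particular it is never `-2`.
-/

open Matrix

/-- The intersection matrix `(⟨F_i − G_i, F_j − G_j⟩)` of the classes `F_i − G_i`. -/
def N : Matrix (Fin 4) (Fin 4) ℤ :=
  !![-8, 2, 2, 2;
     2, -8, 2, 2;
     2, 2, -8, 2;
     2, 2, 2, -8]

/-- In ℤ/2 the off-diagonal terms of `aᵀMa` cancel in pairs under `(i, j) ↦ (j, i)`. -/
theorem Matrix.even_dotProduct_mulVec_self {n : Type*} [Fintype n] {M : Matrix n n ℤ}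
    (hM : M.IsSymm) (hdiag : ∀ i, Even (M i i)) (a : n → ℤ) : Even (a ⬝ᵥ M *ᵥ a) := by
  rw [← ZMod.intCast_eq_zero_iff_even]
  simp only [dotProduct, mulVec, Finset.mul_sum, Int.cast_sum, ← Finset.sum_product']
  refine Finset.sum_ninvolution Prod.swap (fun ⟨i, j⟩ => ?_) (fun ⟨i, j⟩ hne hswap => hne ?_)
    (fun _ => Finset.mem_univ _) Prod.swap_swap
  · rw [← Int.cast_add, ZMod.intCast_eq_zero_iff_even]
    exact ⟨a i * M i j * a j, by simp only [Prod.fst_swap, Prod.snd_swap, hM.apply i j]; ring⟩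
  · obtain rfl : i = j := congrArg Prod.fst hswap.symm
    rw [ZMod.intCast_eq_zero_iff_even]
    exact (hdiag i).mul_right _ |>.mul_left _

def halfN : Matrix (Fin 4) (Fin 4) ℤ :=
  !![-4, 1, 1, 1;
     1, -4, 1, 1;
     1, 1, -4, 1;
     1, 1, 1, -4]

theorem N_eq_two_smul_halfN : N = 2 • halfN := by
  ext i j; fin_cases i <;> fin_cases j <;> rfl

theorem four_dvd_dotProduct_N_mulVec_self (a : Fin 4 → ℤ) : 4 ∣ a ⬝ᵥ N *ᵥ a := by
  have hsymm : halfN.IsSymm := by ext i j; fin_cases i <;> fin_cases j <;> rfl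
  have hdiag : ∀ i, Even (halfN i i) := by decide
  obtain ⟨k, hk⟩ := halfN.even_dotProduct_mulVec_self hsymm hdiag a
  rw [N_eq_two_smul_halfN, smul_mulVec, dotProduct_smul, hk]
  exact ⟨k, by rw [two_nsmul]; ring⟩

theorem stmt16 :
    N.det = 2000 ∧
    (2000 : ℤ) = 2 ^ 4 * 5 ^ 3 ∧
    ∀ a : Fin 4 → ℤ, a ⬝ᵥ N.mulVec a ≠ -2 := by
  refine ⟨by decide, by norm_num, fun a h => ?_⟩
  have := four_dvd_dotProduct_N_mulVec_self a
  rw [h] at this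
  omega
end
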